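/- arXiv:2111.06859 — 2 statements merged into one kernel-verified Lean document; each statement's English description precedes it below -/
import Mathlib

section
/- Let n be a fixed positive integer, q > 0, and σ ∈ (0,∞). Let V_1, V_2, … be i.i.d. real-valued random variables with 0 < E[(V_1 − ψ)²] < ∞ for a fixed ψ ∈ ℝ, and for each K ≥ 2 let T_K be a real-valued random variable on the same probability space such that √(nK)·(T_K − ψ) converges in distribution to N(0, σ²) as K → ∞. Define S²_{sec,K} = (1/(K−1))·Σ_{i=1}^K (V_i − T_K)² and W_{S,K} = √K·(T_K − ψ)/S_{sec,K}. Then P(−q ≤ W_{S,K} ≤ q) → Φ(q·√(n·E[(V_1 − ψ)²])/σ) − Φ(−q·√(n·E[(V_1 − ψ)²])/σ) as K → ∞, where Φ is the standard normal cdf; in particular the limiting coverage differs from the nominal level. -/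
/-!
The strong law makes the sectioning variance `S²_{sec,K}` consistent for `E[(V₁ - ψ)²]`; this
needs `T_K → ψ` in probability, which follows from the CLT for `T_K` since `√(nK) → ∞`. Slutsky's
theorem then gives `|√(nK)(T_K - ψ)| - q √(n S²_{sec,K}) ⇒ |σ Z| - q √(n E[(V₁ - ψ)²])` with `Z`
standard normal, and since the normal law has no atoms the portmanteau theorem yields the limit of
the probability that this is `≤ 0`. Where `S²_{sec,K} > 0` that event is exactly
`|W_{S,K}| ≤ q`, and `S²_{sec,K} ≤ 0` has vanishing probability.
-/

open MeasureTheory ProbabilityTheory Filter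

/-- Standard normal cumulative distribution function `Φ`. -/
noncomputable def stdNormalCDF (q : ℝ) : ℝ :=
  ((ProbabilityTheory.gaussianReal 0 1) (Set.Iic q)).toReal

/-- The sectioning statistic `W_{S,K} = √K (T_K - ψ) / S_{sec,K}` built from the batch
estimators `V_0, …, V_{K-1}` and the full-data estimator `T_K`. -/
noncomputable def WSK {Ω : Type*} (V : ℕ → Ω → ℝ) (T : ℕ → Ω → ℝ) (ψ : ℝ)
    (K : ℕ) (ω : Ω) : ℝ :=
  Real.sqrt K * (T K ω - ψ) /
    Real.sqrt (((K : ℝ) - 1)⁻¹ * ∑ i ∈ Finset.range K, (V i ω - T K ω) ^ 2)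

open Set Topology

section ConvergenceInDistribution

variable {ι Ω Ω' : Type*} [MeasurableSpace Ω] [MeasurableSpace Ω'] {μ : Measure Ω}
  {μ' : Measure Ω'} [IsProbabilityMeasure μ] [IsProbabilityMeasure μ'] {l : Filter ι}

lemma measureReal_map_Ioc {X : Ω → ℝ} (hX : AEMeasurable X μ) {a b : ℝ} (hab : a ≤ b) :
    (μ.map X).real (Ioc a b) = μ.real {ω | X ω ≤ b} - μ.real {ω | X ω ≤ a} := by
  rw [← Iic_sdiff_Iic, measureReal_sdiff (Iic_subset_Iic.2 hab) measurableSet_Iic,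
    map_measureReal_apply_of_aemeasurable hX measurableSet_Iic,
    map_measureReal_apply_of_aemeasurable hX measurableSet_Iic]
  rfl

/-- The half-open intervals form a π-system containing arbitrarily small neighbourhoods of each
point, so convergence of their probabilities determines weak convergence. -/
lemma tendstoInDistribution_of_tendsto_measureReal_le [l.IsCountablyGenerated]
    {X : ι → Ω → ℝ} {Z : Ω' → ℝ} (hX : ∀ i, AEMeasurable (X i) μ) (hZ : AEMeasurable Z μ')
    (h : ∀ x, Tendsto (fun i ↦ μ.real {ω | X i ω ≤ x}) l (𝓝 (μ'.real {ω | Z ω ≤ x}))) :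
    TendstoInDistribution X l Z (fun _ ↦ μ) μ' := by
  refine ⟨hX, hZ, (isPiSystem_Ioc id id).tendsto_probabilityMeasure_of_tendsto_of_mem ?_ ?_ ?_⟩
  · rintro _ ⟨a, b, -, rfl⟩
    exact measurableSet_Ioc
  · intro u hu x hx
    obtain ⟨ε, hε, hball⟩ := Metric.isOpen_iff.1 hu x hx
    refine ⟨Ioc (x - ε / 2) (x + ε / 2),
      ⟨x - ε / 2, x + ε / 2, show x - ε / 2 < x + ε / 2 by linarith, rfl⟩,
      Ioc_mem_nhds (by linarith) (by linarith), fun y hy ↦ hball ?_⟩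
    rw [Real.ball_eq_Ioo]
    exact ⟨by linarith [hy.1], by linarith [hy.2]⟩
  · rintro _ ⟨a, b, hab : a < b, rfl⟩
    rw [← NNReal.tendsto_coe]
    change Tendsto (fun i ↦ (μ.map (X i)).real (Ioc a b)) l (𝓝 ((μ'.map Z).real (Ioc a b)))
    simp only [measureReal_map_Ioc (hX _) hab.le, measureReal_map_Ioc hZ hab.le]
    exact (h b).sub (h a)

variable {E : Type*} [PseudoMetricSpace E] [MeasurableSpace E] [OpensMeasurableSpace E]

lemma MeasureTheory.TendstoInDistribution.tendsto_measureReal_preimage {X : ι → Ω → E}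
    {Z : Ω' → E} (h : TendstoInDistribution X l Z (fun _ ↦ μ) μ') {s : Set E}
    (hs : MeasurableSet s) (hfrontier : μ' (Z ⁻¹' frontier s) = 0) :
    Tendsto (fun i ↦ μ.real (X i ⁻¹' s)) l (𝓝 (μ'.real (Z ⁻¹' s))) := by
  have := ProbabilityMeasure.tendsto_measure_of_null_frontier_of_tendsto' h.tendsto (E := s)
    (by rwa [ProbabilityMeasure.coe_mk,
      Measure.map_apply_of_aemeasurable h.aemeasurable_limit measurableSet_frontier])
  simp only [ProbabilityMeasure.coe_mk, Measure.map_apply_of_aemeasurable h.aemeasurable_limit hs,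
    Measure.map_apply_of_aemeasurable (h.forall_aemeasurable _) hs] at this
  exact (ENNReal.tendsto_toReal (measure_ne_top _ _)).comp this

lemma MeasureTheory.TendstoInDistribution.tendstoInMeasure_const {X : ι → Ω → E} {c : E}
    (h : TendstoInDistribution X l (fun _ ↦ c) (fun _ ↦ μ) μ') :
    TendstoInMeasure μ X l (fun _ ↦ c) := by
  refine tendstoInMeasure_iff_measureReal_dist.2 fun ε hε ↦ ?_
  have hclosed : IsClosed {x | ε ≤ dist x c} := isClosed_le continuous_const (by fun_prop)
  have hc : (fun _ : Ω' ↦ c) ⁻¹' {x | ε ≤ dist x c} = ∅ :=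
    preimage_const_of_notMem (by simpa using hε)
  simpa [hc] using h.tendsto_measureReal_preimage hclosed.measurableSet
    (measure_mono_null (preimage_mono hclosed.frontier_subset) (by rw [hc, measure_empty]))

end ConvergenceInDistribution

section ConvergenceInMeasure

variable {Ω : Type*} [MeasurableSpace Ω] {μ : Measure Ω} [IsProbabilityMeasure μ]

lemma tendstoInMeasure_const_of_tendsto {E : Type*} [PseudoMetricSpace E] {r : ℕ → E} {c : E}
    (hr : Tendsto r atTop (𝓝 c)) :
    TendstoInMeasure μ (fun K _ ↦ r K) atTop (fun _ ↦ c) :=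
  tendstoInMeasure_of_tendsto_ae (fun _ ↦ aestronglyMeasurable_const) (ae_of_all _ fun _ ↦ hr)

lemma MeasureTheory.TendstoInDistribution.tendstoInMeasure_smul {Ω' E : Type*}
    [MeasurableSpace Ω'] {μ' : Measure Ω'} [IsProbabilityMeasure μ'] [NormedAddCommGroup E]
    [NormedSpace ℝ E] [SecondCountableTopology E] [MeasurableSpace E] [BorelSpace E]
    {X : ℕ → Ω → E} {Z : Ω' → E} {r : ℕ → ℝ}
    (hX : TendstoInDistribution X atTop Z (fun _ ↦ μ) μ') (hr : Tendsto r atTop (𝓝 0)) :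
    TendstoInMeasure μ (fun K ω ↦ r K • X K ω) atTop (fun _ ↦ 0) := by
  have h := hX.continuous_comp_prodMk_of_tendstoInMeasure_const (g := fun p : E × ℝ ↦ p.2 • p.1)
    (by fun_prop) (tendstoInMeasure_const_of_tendsto hr) (fun _ ↦ aemeasurable_const)
  refine (h.congr (fun _ ↦ ae_of_all _ fun _ ↦ rfl) (ae_of_all _ fun _ ↦ ?_)).tendstoInMeasure_const
  simp

lemma MeasureTheory.TendstoInMeasure.tendsto_measureReal_le_of_lt {ι : Type*} {l : Filter ι}
    {Y : ι → Ω → ℝ} {c a : ℝ} (hY : TendstoInMeasure μ Y l (fun _ ↦ c)) (hac : a < c) :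
    Tendsto (fun i ↦ μ.real {ω | Y i ω ≤ a}) l (𝓝 0) := by
  refine squeeze_zero (fun _ ↦ measureReal_nonneg) (fun i ↦ measureReal_mono fun ω hω ↦ ?_)
    (tendstoInMeasure_iff_measureReal_dist.1 hY (c - a) (sub_pos.2 hac))
  show c - a ≤ dist (Y i ω) c
  rw [Real.dist_eq]
  exact le_abs.2 (Or.inr (by linarith [hω.out]))

lemma tendsto_measureReal_of_mem_iff_of_notMem {ι : Type*} {l : Filter ι} {s t e : ι → Set Ω}
    {a : ℝ} (hst : ∀ i, ∀ ω ∉ e i, ω ∈ s i ↔ ω ∈ t i)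
    (he : Tendsto (fun i ↦ μ.real (e i)) l (𝓝 0))
    (ht : Tendsto (fun i ↦ μ.real (t i)) l (𝓝 a)) :
    Tendsto (fun i ↦ μ.real (s i)) l (𝓝 a) := by
  have hsub : ∀ {s t : ι → Set Ω}, (∀ i, ∀ ω ∉ e i, ω ∈ s i → ω ∈ t i) →
      ∀ i, μ.real (s i) ≤ μ.real (t i) + μ.real (e i) := fun h i ↦
    (measureReal_mono fun ω hω ↦ (em (ω ∈ e i)).elim Or.inr fun he ↦ Or.inl (h i ω he hω)).trans
      (measureReal_union_le _ _)
  refine tendsto_of_tendsto_of_tendsto_of_le_of_le (by simpa using ht.sub he)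
    (by simpa using ht.add he) (fun i ↦ ?_) (hsub fun i ω hω ↦ (hst i ω hω).1)
  linarith [hsub (fun i ω hω ↦ (hst i ω hω).2) i]

end ConvergenceInMeasure

section StandardNormal

instance : NullSingletonClass (gaussianReal 0 1) :=
  nullSingletonClass_gaussianReal one_ne_zero

lemma stdNormalCDF_div {σ : ℝ} (hσ : 0 < σ) (x : ℝ) :
    stdNormalCDF (x / σ) = (gaussianReal 0 1).real {z | σ * z ≤ x} := by
  have : {z : ℝ | σ * z ≤ x} = Iic (x / σ) := by
    ext z
    simp [le_div_iff₀ hσ, mul_comm]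
  rw [this]
  rfl

lemma gaussianReal_abs_mul_eq_null {σ : ℝ} (hσ : σ ≠ 0) (c : ℝ) :
    gaussianReal 0 1 {z | |σ * z| = c} = 0 := by
  refine measure_mono_null (fun z (hz : |σ * z| = c) ↦ ?_)
    ((toFinite {c / σ, -(c / σ)}).measure_zero _)
  rcases abs_choice (σ * z) with h | h
  · left
    field_simp
    linarith
  · right
    rw [mem_singleton_iff]
    field_simp
    linarith

lemma gaussianReal_real_abs_mul_le {σ c : ℝ} (hσ : 0 < σ) (hc : 0 ≤ c) :
    (gaussianReal 0 1).real {z | |σ * z| ≤ c} =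
      stdNormalCDF (c / σ) - stdNormalCDF (-(c / σ)) := by
  have : {z : ℝ | |σ * z| ≤ c} = Icc (-(c / σ)) (c / σ) := by
    ext z
    rw [mem_Icc, ← neg_div, div_le_iff₀ hσ, le_div_iff₀ hσ, mul_comm z]
    exact abs_le (a := σ * z)
  rw [this, measureReal_congr Ioc_ae_eq_Icc.symm, ← Iic_sdiff_Iic,
    measureReal_sdiff (Iic_subset_Iic.2 (by have := div_nonneg hc hσ.le; linarith))
      measurableSet_Iic]
  rfl

end StandardNormal

section SectioningVariance

open Finset

lemma sum_range_sub_sq_eq (x : ℕ → ℝ) (t ψ : ℝ) (K : ℕ) :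
    ∑ i ∈ range K, (x i - t) ^ 2 = K * ((∑ i ∈ range K, (x i - ψ) ^ 2) / K
      - 2 * (t - ψ) * ((∑ i ∈ range K, (x i - ψ)) / K) + (t - ψ) ^ 2) := by
  rcases K.eq_zero_or_pos with rfl | hK
  · simp
  have hsq : ∀ i, (x i - t) ^ 2 = (x i - ψ) ^ 2 - 2 * (t - ψ) * (x i - ψ) + (t - ψ) ^ 2 :=
    fun i ↦ by ring
  simp only [hsq, sum_add_distrib, sum_sub_distrib, ← mul_sum, sum_const, card_range,
    nsmul_eq_mul]
  field_simp

variable {Ω : Type*}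

/-- The estimator `S²_{sec,K}` of the paper. -/
noncomputable def sectioningVariance (V T : ℕ → Ω → ℝ) (K : ℕ) (ω : Ω) : ℝ :=
  ((K : ℝ) - 1)⁻¹ * ∑ i ∈ range K, (V i ω - T K ω) ^ 2

lemma WSK_eq_div_sqrt_sectioningVariance (V T : ℕ → Ω → ℝ) (ψ : ℝ) (K : ℕ) (ω : Ω) :
    WSK V T ψ K ω = √K * (T K ω - ψ) / √(sectioningVariance V T K ω) :=
  rfl

lemma WSK_mem_Icc_iff {V T : ℕ → Ω → ℝ} {ψ q : ℝ} {n K : ℕ} {ω : Ω} (hn : 1 ≤ n)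
    (hS : 0 < sectioningVariance V T K ω) :
    WSK V T ψ K ω ∈ Icc (-q) q ↔
      |√((n : ℝ) * K) * (T K ω - ψ)| - q * √(n * sectioningVariance V T K ω) ≤ 0 := by
  have hn' : (0 : ℝ) < √n := Real.sqrt_pos.2 (by exact_mod_cast hn)
  have hS' : 0 < √(sectioningVariance V T K ω) := Real.sqrt_pos.2 hS
  rw [Set.mem_Icc, ← abs_le, WSK_eq_div_sqrt_sectioningVariance, abs_div, abs_of_pos hS',
    div_le_iff₀ hS', sub_nonpos, Real.sqrt_mul (Nat.cast_nonneg n),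
    Real.sqrt_mul (Nat.cast_nonneg n), mul_assoc,
    abs_mul √(n : ℝ), abs_of_pos hn', mul_left_comm q, mul_le_mul_iff_right₀ hn']

variable [MeasurableSpace Ω] {μ : Measure Ω}

lemma ae_tendsto_average_comp_of_iid {V : ℕ → Ω → ℝ} (hindep : iIndepFun V μ)
    (hident : ∀ i, IdentDistrib (V i) (V 0) μ μ) {g : ℝ → ℝ} (hg : Measurable g)
    (hint : Integrable (fun ω ↦ g (V 0 ω)) μ) :
    ∀ᵐ ω ∂μ, Tendsto (fun K : ℕ ↦ (∑ i ∈ range K, g (V i ω)) / K) atTop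
      (𝓝 (∫ ω, g (V 0 ω) ∂μ)) :=
  strong_law_ae_real (fun i ω ↦ g (V i ω)) hint
    (fun _ _ hij ↦ (hindep.comp (fun _ ↦ g) (fun _ ↦ hg)).indepFun hij)
    (fun i ↦ (hident i).comp hg)

variable [IsProbabilityMeasure μ]

/-- Expanding around `ψ`, `S²_{sec,K}` is a continuous function of `T_K - ψ`, of the first two
sample moments of `V_i - ψ` (which converge by the strong law) and of `K / (K - 1)`. -/
lemma tendstoInMeasure_sectioningVariance {V T : ℕ → Ω → ℝ} {ψ : ℝ}
    (hmeasV : ∀ i, Measurable (V i)) (hmeasT : ∀ K, Measurable (T K))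
    (hindep : iIndepFun V μ) (hident : ∀ i, IdentDistrib (V i) (V 0) μ μ)
    (hint : Integrable (fun ω ↦ (V 0 ω - ψ) ^ 2) μ)
    (hT : TendstoInMeasure μ (fun K ω ↦ T K ω - ψ) atTop (fun _ ↦ 0)) :
    TendstoInMeasure μ (sectioningVariance V T) atTop
      (fun _ ↦ ∫ ω, (V 0 ω - ψ) ^ 2 ∂μ) := by
  have hint₁ : Integrable (fun ω ↦ V 0 ω - ψ) μ :=
    ((memLp_two_iff_integrable_sq ((hmeasV 0).sub_const ψ).aestronglyMeasurable).2 hint).integrable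
      one_le_two
  have hmoments : TendstoInMeasure μ
      (fun K ω ↦ ((∑ i ∈ range K, (V i ω - ψ) ^ 2) / K, (∑ i ∈ range K, (V i ω - ψ)) / K,
        (K : ℝ) / (K - 1))) atTop
      (fun _ ↦ (∫ ω, (V 0 ω - ψ) ^ 2 ∂μ, ∫ ω, V 0 ω - ψ ∂μ, 1)) := by
    refine tendstoInMeasure_of_tendsto_ae (fun K ↦ Measurable.aestronglyMeasurable (by fun_prop)) ?_
    have hratio : Tendsto (fun K : ℕ ↦ (K : ℝ) / (K - 1)) atTop (𝓝 1) := by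
      simpa only [← sub_eq_add_neg] using tendsto_natCast_div_add_atTop (-1 : ℝ)
    filter_upwards [ae_tendsto_average_comp_of_iid hindep hident
        (g := fun x ↦ (x - ψ) ^ 2) (by fun_prop) hint,
      ae_tendsto_average_comp_of_iid hindep hident (g := fun x ↦ x - ψ) (by fun_prop) hint₁]
      with ω h₂ h₁
    exact h₂.prodMk_nhds (h₁.prodMk_nhds hratio)
  have h := (hT.tendstoInDistribution fun K ↦ ((hmeasT K).sub_const ψ).aemeasurable)
    |>.continuous_comp_prodMk_of_tendstoInMeasure_const
      (g := fun p : ℝ × ℝ × ℝ × ℝ ↦ p.2.2.2 * (p.2.1 - 2 * p.1 * p.2.2.1 + p.1 ^ 2))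
      (by fun_prop) hmoments (fun K ↦ by fun_prop)
  refine (h.congr (fun K ↦ ae_of_all _ fun ω ↦ ?_) (ae_of_all _ fun _ ↦ ?_)).tendstoInMeasure_const
  · simp only [sectioningVariance, sum_range_sub_sq_eq (fun i ↦ V i ω) (T K ω) ψ]
    ring
  · simp

end SectioningVariance

/-- **Asymptotic coverage of sectioning as the number of batches grows (Theorem 7,
sectioning part).** With the batch size `n` fixed, if the i.i.d. batch estimators `V_i`
satisfy `0 < E[(V₁ - ψ)²] < ∞` and the full-data estimator satisfies the CLT
`√(nK)(T_K - ψ) ⇒ N(0, σ²)`, then the coverage of the symmetric sectioning CI tends to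
`Φ(q √(n E[(V₁-ψ)²]) / σ) - Φ(-q √(n E[(V₁-ψ)²]) / σ)` as `K → ∞`. -/
theorem sectioning_coverage_limit
    {Ω : Type*} [MeasurableSpace Ω] (μ : Measure Ω) [IsProbabilityMeasure μ]
    (n : ℕ) (hn : 1 ≤ n) (q : ℝ) (hq : 0 < q) (σ : ℝ) (hσ : 0 < σ) (ψ : ℝ)
    (V : ℕ → Ω → ℝ) (T : ℕ → Ω → ℝ)
    (hmeasV : ∀ i, Measurable (V i))
    (hmeasT : ∀ K, Measurable (T K))
    (hindep : iIndepFun V μ)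
    (hident : ∀ i, IdentDistrib (V i) (V 0) μ μ)
    (hint2 : Integrable (fun ω => (V 0 ω - ψ) ^ 2) μ)
    (hpos : 0 < ∫ ω, (V 0 ω - ψ) ^ 2 ∂μ)
    (hCLT : ∀ x : ℝ,
      Tendsto (fun K : ℕ =>
          (μ {ω | Real.sqrt ((n : ℝ) * K) * (T K ω - ψ) ≤ x}).toReal)
        atTop (nhds (stdNormalCDF (x / σ)))) :
    Tendsto (fun K : ℕ => (μ {ω | WSK V T ψ K ω ∈ Set.Icc (-q) q}).toReal)
      atTop
      (nhds (stdNormalCDF (q * Real.sqrt ((n : ℝ) * ∫ ω, (V 0 ω - ψ) ^ 2 ∂μ) / σ)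
        - stdNormalCDF (-(q * Real.sqrt ((n : ℝ) * ∫ ω, (V 0 ω - ψ) ^ 2 ∂μ) / σ)))) := by
  set v := ∫ ω, (V 0 ω - ψ) ^ 2 ∂μ
  have hn₀ : (0 : ℝ) < n := by exact_mod_cast hn
  have hX : TendstoInDistribution (fun (K : ℕ) ω ↦ √((n : ℝ) * K) * (T K ω - ψ)) atTop (σ * ·)
      (fun _ ↦ μ) (gaussianReal 0 1) :=
    tendstoInDistribution_of_tendsto_measureReal_le (fun K ↦ by fun_prop) (by fun_prop)
      fun x ↦ by rw [← stdNormalCDF_div hσ]; exact hCLT x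
  have hT : TendstoInMeasure μ (fun K ω ↦ T K ω - ψ) atTop (fun _ ↦ 0) := by
    have hr : Tendsto (fun K : ℕ ↦ (√((n : ℝ) * K))⁻¹) atTop (𝓝 0) :=
      tendsto_inv_atTop_zero.comp <| Real.tendsto_sqrt_atTop.comp <|
        tendsto_natCast_atTop_atTop.const_mul_atTop hn₀
    refine (hX.tendstoInMeasure_smul hr).congr' ?_ (ae_of_all _ fun _ ↦ rfl)
    filter_upwards [eventually_ge_atTop 1] with K hK
    exact ae_of_all _ fun ω ↦ inv_mul_cancel_left₀ (by positivity) _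
  have hS := tendstoInMeasure_sectioningVariance hmeasV hmeasT hindep hident hint2 hT
  have hR := hX.continuous_comp_prodMk_of_tendstoInMeasure_const
    (g := fun p : ℝ × ℝ ↦ |p.1| - q * √(n * p.2)) (Y := sectioningVariance V T) (by fun_prop) hS
    (fun K ↦ by unfold sectioningVariance; fun_prop)
  have hlim := hR.tendsto_measureReal_preimage measurableSet_Iic (s := Iic 0) <| by
    simp only [frontier_Iic, preimage, mem_singleton_iff, sub_eq_zero]
    exact gaussianReal_abs_mul_eq_null hσ.ne' _
  rw [show (fun z ↦ |σ * z| - q * √(n * v)) ⁻¹' Iic 0 = {z | |σ * z| ≤ q * √(n * v)} by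
      ext; simp, gaussianReal_real_abs_mul_le hσ (by positivity)] at hlim
  exact tendsto_measureReal_of_mem_iff_of_notMem
    (e := fun K ↦ {ω | sectioningVariance V T K ω ≤ 0})
    (fun K ω hω ↦ WSK_mem_Icc_iff hn (not_le.1 hω)) (hS.tendsto_measureReal_le_of_lt hpos) hlim
end

section
/- For every real q > 1 the following strict chain of inequalities holds between the leading coverage-error coefficients of the four batching methods in the K = 2 normal example: −4q/(π(q²+1)) < −4q⁵/(π(q²+1)³) < −4q⁵/(π(q²+1)³) + q/(π(q²+1)²) < −4q(q²−1)²/(π(q²+1)³) < 0. (These four quantities are, respectively, the sectioned-jackknife, sectioning–batching, sectioning, and batching coefficients of the n^{−1} coverage-error term, up to the common positive factor λ².) -/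
/-! All four coefficients share the positive denominator `π (q² + 1)³`; over it their numerators
are `-4q(q² + 1)²`, `-4q⁵`, `-4q⁵ + q(q² + 1)` and `-4q(q² - 1)²`, and consecutive differences
are `4q(2q² + 1)`, `q(q² + 1)` and `q(7q² - 5)`, all positive once `q > 1`. -/

open Real

namespace CoverageError

noncomputable def sectionedJackknifeCoeff (q : ℝ) : ℝ := -4 * q / (π * (q ^ 2 + 1))

noncomputable def sectioningBatchingCoeff (q : ℝ) : ℝ := -4 * q ^ 5 / (π * (q ^ 2 + 1) ^ 3)

noncomputable def sectioningCoeff (q : ℝ) : ℝ :=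
  sectioningBatchingCoeff q + q / (π * (q ^ 2 + 1) ^ 2)

noncomputable def batchingCoeff (q : ℝ) : ℝ := -4 * q * (q ^ 2 - 1) ^ 2 / (π * (q ^ 2 + 1) ^ 3)

lemma pi_mul_sq_add_one_pow_pos (q : ℝ) (k : ℕ) : 0 < π * (q ^ 2 + 1) ^ k := by positivity

lemma sectionedJackknifeCoeff_eq (q : ℝ) :
    sectionedJackknifeCoeff q = -4 * q * (q ^ 2 + 1) ^ 2 / (π * (q ^ 2 + 1) ^ 3) := by
  have := (pi_mul_sq_add_one_pow_pos q 1).ne'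
  unfold sectionedJackknifeCoeff
  field_simp

lemma sectioningCoeff_eq (q : ℝ) :
    sectioningCoeff q = (-4 * q ^ 5 + q * (q ^ 2 + 1)) / (π * (q ^ 2 + 1) ^ 3) := by
  have := (pi_mul_sq_add_one_pow_pos q 1).ne'
  unfold sectioningCoeff sectioningBatchingCoeff
  field_simp

variable {q : ℝ}

lemma sectionedJackknifeCoeff_lt_sectioningBatchingCoeff (hq : 0 < q) :
    sectionedJackknifeCoeff q < sectioningBatchingCoeff q := by
  rw [sectionedJackknifeCoeff_eq, sectioningBatchingCoeff,
    div_lt_div_iff_of_pos_right (pi_mul_sq_add_one_pow_pos q 3)]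
  have : 0 < 4 * q * (2 * q ^ 2 + 1) := by positivity
  linear_combination this

lemma sectioningBatchingCoeff_lt_sectioningCoeff (hq : 0 < q) :
    sectioningBatchingCoeff q < sectioningCoeff q :=
  lt_add_of_pos_right _ (div_pos hq (pi_mul_sq_add_one_pow_pos q 2))

lemma sectioningCoeff_lt_batchingCoeff (hq : 0 < q) (hq₂ : 5 < 7 * q ^ 2) :
    sectioningCoeff q < batchingCoeff q := by
  rw [sectioningCoeff_eq, batchingCoeff,
    div_lt_div_iff_of_pos_right (pi_mul_sq_add_one_pow_pos q 3)]
  have : 0 < q * (7 * q ^ 2 - 5) := mul_pos hq (by linarith)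
  linear_combination this

lemma batchingCoeff_neg (hq : 0 < q) (hq₁ : q ^ 2 ≠ 1) : batchingCoeff q < 0 := by
  have : 0 < 4 * q * (q ^ 2 - 1) ^ 2 := by
    have := sub_ne_zero.mpr hq₁
    positivity
  exact div_neg_of_neg_of_pos (by linarith) (pi_mul_sq_add_one_pow_pos q 3)

end CoverageError

open CoverageError in
/-- **Strict ordering of the leading coverage-error coefficients in the `K = 2`
normal example.** For `q > 1`, the sectioned-jackknife, sectioning-batching,
sectioning and batching coefficients of the `n⁻¹` coverage-error term satisfy
`SJ < SB < S < B < 0`. -/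
theorem coverage_error_coefficients_ordering (q : ℝ) (hq : 1 < q) :
    -(4 : ℝ) * q / (Real.pi * (q ^ 2 + 1))
        < -(4 : ℝ) * q ^ 5 / (Real.pi * (q ^ 2 + 1) ^ 3) ∧
    -(4 : ℝ) * q ^ 5 / (Real.pi * (q ^ 2 + 1) ^ 3)
        < -(4 : ℝ) * q ^ 5 / (Real.pi * (q ^ 2 + 1) ^ 3)
            + q / (Real.pi * (q ^ 2 + 1) ^ 2) ∧
    -(4 : ℝ) * q ^ 5 / (Real.pi * (q ^ 2 + 1) ^ 3)
            + q / (Real.pi * (q ^ 2 + 1) ^ 2)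
        < -(4 : ℝ) * q * (q ^ 2 - 1) ^ 2 / (Real.pi * (q ^ 2 + 1) ^ 3) ∧
    -(4 : ℝ) * q * (q ^ 2 - 1) ^ 2 / (Real.pi * (q ^ 2 + 1) ^ 3) < 0 := by
  have hq₀ : 0 < q := one_pos.trans hq
  have hq₂ : 1 < q ^ 2 := one_lt_pow₀ hq two_ne_zero
  exact ⟨sectionedJackknifeCoeff_lt_sectioningBatchingCoeff hq₀,
    sectioningBatchingCoeff_lt_sectioningCoeff hq₀,
    sectioningCoeff_lt_batchingCoeff hq₀ (by linarith),
    batchingCoeff_neg hq₀ hq₂.ne'⟩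
end
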